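/- arXiv:1810.07406 — 4 statements merged into one kernel-verified Lean document; each statement's English description precedes it below -/
import Mathlib

section
/- Fix x_1,…,x_n, weights w with (1/n)∑ w_i = 1, and a function g bounded by M with g ∈ Comb(H). Suppose y_1,…,y_n are independent random variables with E[y_i] = g(x_i) and |y_i − g(x_i)| ≤ 2M. Then for any δ ∈ (0,1), with probability at least 1−δ: | (1/n)∑_{i=1}^n w_i y_i − (1/n')∑_{i=n+1}^{n+n'} g(x_i) | ≤ (M/2)·d_H(w) + 2M·sqrt( 2·‖w/n‖₂²·ln(2/δ) ). -/
/-!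
Split `(1/n) ∑ wᵢ yᵢ − (1/n') ∑ g(x_{n+j})` into the centred sum `Z = ∑ (wᵢ/n)(yᵢ − g(xᵢ))` and
the weighted discrepancy of `g`. The discrepancy is linear in `g`, so for `g = ∑ αⱼ hⱼ` it is at
most `∑ |αⱼ|` times its maximum absolute value on `H`, that is at most `(M/2) d_H(w)`. Each summand
of `Z` is centred and bounded by `2M |wᵢ|/n`, hence sub-Gaussian with parameter `(2M wᵢ/n)²` by
Hoeffding's lemma; by independence `Z` is sub-Gaussian with parameter `4M² ‖w/n‖₂²`, and the
two-sided Chernoff bound gives `|Z| ≤ 2M √(2 ‖w/n‖₂² ln(2/δ))` with probability at least `1 − δ`.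
-/

open MeasureTheory ProbabilityTheory Real
open scoped NNReal

theorem abs_map_sum_smul_le_mul_sup' {E ι : Type*} [AddCommGroup E] [Module ℝ E]
    (L : E →ₗ[ℝ] ℝ) {H : Finset E} (hne : H.Nonempty) (s : Finset ι) (α : ι → ℝ) (v : ι → E)
    (hv : ∀ j ∈ s, v j ∈ H) :
    |L (∑ j ∈ s, α j • v j)| ≤ (∑ j ∈ s, |α j|) * H.sup' hne (fun h ↦ |L h|) := by
  rw [map_sum, Finset.sum_mul]
  refine (Finset.abs_sum_le_sum_abs _ _).trans (Finset.sum_le_sum fun j hj ↦ ?_)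
  rw [map_smul, smul_eq_mul, abs_mul]
  exact mul_le_mul_of_nonneg_left (Finset.le_sup' (fun h ↦ |L h|) (hv j hj)) (abs_nonneg _)

def boundedComb {𝒳 : Type*} (H : Finset (𝒳 → ℝ)) (M : ℝ) : Set (𝒳 → ℝ) :=
  {g | ∃ (k : ℕ) (α : Fin k → ℝ) (hs : Fin k → 𝒳 → ℝ),
    (∀ j, hs j ∈ H) ∧ (∀ x, g x = ∑ j, α j * hs j x) ∧ (∑ j, |α j|) ≤ M}

theorem abs_map_le_mul_sup'_of_mem_boundedComb {𝒳 : Type*} (L : (𝒳 → ℝ) →ₗ[ℝ] ℝ)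
    {H : Finset (𝒳 → ℝ)} (hne : H.Nonempty) {M : ℝ} {g : 𝒳 → ℝ} (hg : g ∈ boundedComb H M) :
    |L g| ≤ M * H.sup' hne (fun h ↦ |L h|) := by
  obtain ⟨k, α, hs, hmem, hrep, hα⟩ := hg
  have hD : 0 ≤ H.sup' hne (fun h ↦ |L h|) :=
    (abs_nonneg _).trans (Finset.le_sup' (fun h ↦ |L h|) hne.choose_spec)
  have hg_eq : g = ∑ j, α j • hs j := funext fun x ↦ by simp [hrep]
  rw [hg_eq]
  exact (abs_map_sum_smul_le_mul_sup' L hne _ α hs fun j _ ↦ hmem j).trans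
    (mul_le_mul_of_nonneg_right hα hD)

/-- `d_H(w)` is twice the maximum of `|weightedDiscrepancy w xs xt h|` over `h ∈ H`. -/
noncomputable def weightedDiscrepancy {𝒳 : Type*} {n n' : ℕ} (w : Fin n → ℝ) (xs : Fin n → 𝒳)
    (xt : Fin n' → 𝒳) : (𝒳 → ℝ) →ₗ[ℝ] ℝ where
  toFun f := (1 / (n : ℝ)) * ∑ i, w i * f (xs i) - (1 / (n' : ℝ)) * ∑ j, f (xt j)
  map_add' f f' := by simp only [Pi.add_apply, mul_add, Finset.sum_add_distrib]; ring
  map_smul' c f := by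
    simp only [Pi.smul_apply, smul_eq_mul, RingHom.id_apply, mul_sub, Finset.mul_sum]
    congr 1 <;> exact Finset.sum_congr rfl fun _ _ ↦ by ring

theorem sum_div_mul_sub_add_weightedDiscrepancy {𝒳 : Type*} {n n' : ℕ} (w : Fin n → ℝ)
    (xs : Fin n → 𝒳) (xt : Fin n' → 𝒳) (v : Fin n → ℝ) (f : 𝒳 → ℝ) :
    ∑ i, w i / n * (v i - f (xs i)) + weightedDiscrepancy w xs xt f =
      1 / (n : ℝ) * ∑ i, w i * v i - 1 / (n' : ℝ) * ∑ j, f (xt j) := by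
  have hsplit : ∑ i, w i / n * (v i - f (xs i)) =
      1 / (n : ℝ) * ∑ i, w i * v i - 1 / (n : ℝ) * ∑ i, w i * f (xs i) := by
    rw [Finset.mul_sum, Finset.mul_sum, ← Finset.sum_sub_distrib]
    exact Finset.sum_congr rfl fun i _ ↦ by ring
  rw [hsplit]
  simp only [weightedDiscrepancy, LinearMap.coe_mk, AddHom.coe_mk]
  ring

theorem sum_div_sq_pos {ι : Type*} [Fintype ι] {w : ι → ℝ} (hw : ∑ i, w i ≠ 0) {r : ℝ}
    (hr : r ≠ 0) : 0 < ∑ i, (w i / r) ^ 2 := by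
  obtain ⟨i, -, hi⟩ := Finset.exists_ne_zero_of_sum_ne_zero hw
  have hi' : w i / r ≠ 0 := div_ne_zero hi hr
  exact Finset.sum_pos' (fun _ _ ↦ sq_nonneg _) ⟨i, Finset.mem_univ _, by positivity⟩

namespace ProbabilityTheory

variable {Ω : Type*} {mΩ : MeasurableSpace Ω} {μ : Measure Ω}

lemma hasSubgaussianMGF_sub_of_abs_sub_le [IsProbabilityMeasure μ] {Y : Ω → ℝ} {m b : ℝ}
    (hY : AEMeasurable Y μ) (hmean : μ[Y] = m) (hb : ∀ᵐ ω ∂μ, |Y ω - m| ≤ b) :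
    HasSubgaussianMGF (fun ω ↦ Y ω - m) (‖b‖₊ ^ 2) μ := by
  have h := hasSubgaussianMGF_of_mem_Icc (a := m - b) (b := m + b) hY <| by
    filter_upwards [hb] with ω hω
    exact ⟨by linarith [neg_abs_le (Y ω - m)], by linarith [le_abs_self (Y ω - m)]⟩
  rw [hmean] at h
  convert h using 2
  ext
  simp only [coe_nnnorm, NNReal.coe_div, Real.norm_eq_abs, NNReal.coe_ofNat]
  rw [add_sub_sub_cancel, ← two_mul, abs_mul, abs_two]
  ring

lemma hasSubgaussianMGF_sum_mul_sub [IsProbabilityMeasure μ] {ι : Type*} [Fintype ι]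
    {y : ι → Ω → ℝ} (hmeas : ∀ i, Measurable (y i)) (hindep : iIndepFun y μ)
    {m : ι → ℝ} (hmean : ∀ i, μ[y i] = m i) {b : ℝ} (hb : ∀ i, ∀ᵐ ω ∂μ, |y i ω - m i| ≤ b)
    (a : ι → ℝ) :
    HasSubgaussianMGF (fun ω ↦ ∑ i, a i * (y i ω - m i)) (‖b‖₊ ^ 2 * ∑ i, ‖a i‖₊ ^ 2) μ := by
  have hindep' : iIndepFun (fun i ω ↦ a i * (y i ω - m i)) μ :=
    hindep.comp (fun i x ↦ a i * (x - m i)) fun i ↦ by fun_prop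
  rw [Finset.mul_sum]
  refine HasSubgaussianMGF.sum_of_iIndepFun hindep' fun i _ ↦ ?_
  convert (hasSubgaussianMGF_sub_of_abs_sub_le (hmeas i).aemeasurable (hmean i) (hb i)).const_mul
    (a i) using 1
  rw [mul_comm]
  congr 1
  ext
  simp only [NNReal.coe_pow, coe_nnnorm, Real.norm_eq_abs, sq_abs]
  rfl

namespace HasSubgaussianMGF

variable {X : Ω → ℝ} {c : ℝ≥0}

lemma measureReal_le_abs_le (h : HasSubgaussianMGF X c μ) {ε : ℝ} (hε : 0 ≤ ε) :
    μ.real {ω | ε ≤ |X ω|} ≤ 2 * exp (-ε ^ 2 / (2 * c)) := by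
  have hsplit : {ω | ε ≤ |X ω|} = {ω | ε ≤ X ω} ∪ {ω | ε ≤ (-X) ω} := by
    ext ω
    simp only [Set.mem_ofPred_eq, Set.mem_union, Pi.neg_apply, le_abs]
  calc μ.real {ω | ε ≤ |X ω|}
      ≤ μ.real {ω | ε ≤ X ω} + μ.real {ω | ε ≤ (-X) ω} := hsplit ▸ measureReal_union_le _ _
    _ ≤ exp (-ε ^ 2 / (2 * c)) + exp (-ε ^ 2 / (2 * c)) :=
        add_le_add (h.measure_ge_le hε) (h.neg.measure_ge_le hε)
    _ = 2 * exp (-ε ^ 2 / (2 * c)) := by ring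

lemma ofReal_one_sub_le_measure_abs_le [IsProbabilityMeasure μ] (h : HasSubgaussianMGF X c μ)
    (hc : 0 < c) {δ : ℝ} (hδ : 0 < δ) :
    ENNReal.ofReal (1 - δ) ≤ μ {ω | |X ω| ≤ √(2 * c * log (2 / δ))} := by
  rcases le_or_gt 1 δ with hδ1 | hδ1
  · simp [ENNReal.ofReal_eq_zero.2 (sub_nonpos.2 hδ1)]
  set ε := √(2 * c * log (2 / δ))
  have hL : 0 < log (2 / δ) := log_pos (by rw [lt_div_iff₀ hδ]; linarith)
  have hbound : 2 * exp (-ε ^ 2 / (2 * c)) = δ := by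
    rw [sq_sqrt (by positivity), neg_div, mul_div_cancel_left₀ _ (by positivity), exp_neg,
      exp_log (by positivity)]
    field_simp
  have htail : μ {ω | |X ω| ≤ ε}ᶜ ≤ ENNReal.ofReal δ := calc
    μ {ω | |X ω| ≤ ε}ᶜ ≤ μ {ω | ε ≤ |X ω|} :=
        measure_mono fun ω (hω : ¬|X ω| ≤ ε) ↦ (not_le.1 hω).le
    _ = ENNReal.ofReal (μ.real {ω | ε ≤ |X ω|}) := (ofReal_measureReal).symm
    _ ≤ ENNReal.ofReal δ :=
        ENNReal.ofReal_le_ofReal (hbound ▸ h.measureReal_le_abs_le (sqrt_nonneg _))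
  rw [ENNReal.ofReal_sub _ hδ.le, ENNReal.ofReal_one, tsub_le_iff_right, ← measure_univ (μ := μ)]
  exact (measure_univ_le_add_compl _).trans (add_le_add_right htail _)

end HasSubgaussianMGF

end ProbabilityTheory

open MeasureTheory ProbabilityTheory in
theorem stmt_6_general {𝒳 Ω : Type*} [MeasurableSpace Ω]
    (μ : Measure Ω) [IsProbabilityMeasure μ]
    (n n' : ℕ) (hn : 0 < n)
    (xs : Fin n → 𝒳) (xt : Fin n' → 𝒳) (w : Fin n → ℝ)
    (hw1 : (1 / (n : ℝ)) * ∑ i, w i = 1)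
    (H : Finset (𝒳 → ℝ)) (hne : H.Nonempty)
    (M : ℝ) (hM : 0 < M) (g : 𝒳 → ℝ)
    (hg : ∃ (k : ℕ) (α : Fin k → ℝ) (hs : Fin k → 𝒳 → ℝ),
      (∀ j, hs j ∈ H) ∧ (∀ x, g x = ∑ j, α j * hs j x) ∧ (∑ j, |α j|) ≤ M)
    (y : Fin n → Ω → ℝ) (hymeas : ∀ i, Measurable (y i))
    (hyindep : iIndepFun y μ)
    (hymean : ∀ i, ∫ ω, y i ω ∂μ = g (xs i))
    (hybd : ∀ i, ∀ᵐ ω ∂μ, |y i ω - g (xs i)| ≤ 2 * M)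
    (δ : ℝ) (hδ : δ ∈ Set.Ioo (0 : ℝ) 1) :
    ENNReal.ofReal (1 - δ) ≤
      μ {ω | |(1 / (n : ℝ)) * ∑ i, w i * y i ω - (1 / (n' : ℝ)) * ∑ j, g (xt j)| ≤
        (M / 2) * (2 * H.sup' hne fun h =>
          |(1 / (n : ℝ)) * ∑ i, w i * h (xs i) - (1 / (n' : ℝ)) * ∑ j, h (xt j)|) +
        2 * M * Real.sqrt (2 * (∑ i, (w i / n) ^ 2) * Real.log (2 / δ))} := by
  set L := weightedDiscrepancy w xs xt
  set W := ∑ i, (w i / n) ^ 2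
  have hdet := abs_map_le_mul_sup'_of_mem_boundedComb L hne hg
  have hW : 0 < W :=
    sum_div_sq_pos (right_ne_zero_of_mul (hw1.trans_ne one_ne_zero)) (Nat.cast_ne_zero.2 hn.ne')
  have hZ := hasSubgaussianMGF_sum_mul_sub hymeas hyindep hymean hybd fun i ↦ w i / n
  set c := ‖2 * M‖₊ ^ 2 * ∑ i, ‖w i / (n : ℝ)‖₊ ^ 2
  have hc : (c : ℝ) = (2 * M) ^ 2 * W := by
    simp only [c, W, NNReal.coe_mul, NNReal.coe_pow, NNReal.coe_sum, coe_nnnorm,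
      Real.norm_eq_abs, sq_abs]
  have hε : √(2 * c * log (2 / δ)) = 2 * M * √(2 * W * log (2 / δ)) := by
    rw [hc, show 2 * ((2 * M) ^ 2 * W) * log (2 / δ) = (2 * M) ^ 2 * (2 * W * log (2 / δ)) by
      ring, sqrt_mul (by positivity), sqrt_sq (by positivity)]
  refine (hZ.ofReal_one_sub_le_measure_abs_le (NNReal.coe_pos.1 (hc ▸ by positivity)) hδ.1).trans
    (measure_mono fun ω hω ↦ ?_)
  rw [Set.mem_ofPred_eq, hε] at hω
  calc _ = |∑ i, w i / n * (y i ω - g (xs i)) + L g| :=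
        by rw [sum_div_mul_sub_add_weightedDiscrepancy]
    _ ≤ |∑ i, w i / n * (y i ω - g (xs i))| + |L g| := abs_add_le _ _
    _ ≤ 2 * M * √(2 * W * log (2 / δ)) + M * H.sup' hne (fun h ↦ |L h|) := add_le_add hω hdet
    _ = M / 2 * (2 * H.sup' hne fun h ↦ |L h|) + 2 * M * √(2 * W * log (2 / δ)) := by ring

open MeasureTheory ProbabilityTheory in
/-- Theorem 1: if `g ∈ Comb(H)` is bounded by `M`, the weights `w` are nonnegative
with mean 1, and the outcomes `yᵢ` are independent with mean `g(xᵢ)` and `|yᵢ − g(xᵢ)| ≤ 2M` a.s.,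
then with probability at least `1 − δ` the weighted estimation error is bounded by
`(M/2)·d_H(w) + 2M √(2 ‖w/n‖₂² ln(2/δ))`. -/
theorem stmt_6 {𝒳 Ω : Type*} [MeasurableSpace Ω]
    (μ : Measure Ω) [IsProbabilityMeasure μ]
    (n n' : ℕ) (hn : 0 < n) (hn' : 0 < n')
    (xs : Fin n → 𝒳) (xt : Fin n' → 𝒳) (w : Fin n → ℝ)
    (hw0 : ∀ i, 0 ≤ w i) (hw1 : (1 / (n : ℝ)) * ∑ i, w i = 1)
    (H : Finset (𝒳 → ℝ)) (hne : H.Nonempty)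
    (h01 : ∀ h ∈ H, ∀ x, h x = 0 ∨ h x = 1)
    (M : ℝ) (hM : 0 < M) (g : 𝒳 → ℝ) (hgb : ∀ x, |g x| ≤ M)
    (hg : ∃ (k : ℕ) (α : Fin k → ℝ) (hs : Fin k → 𝒳 → ℝ),
      (∀ j, hs j ∈ H) ∧ (∀ x, g x = ∑ j, α j * hs j x) ∧ (∑ j, |α j|) ≤ M)
    (y : Fin n → Ω → ℝ) (hymeas : ∀ i, Measurable (y i))
    (hyindep : iIndepFun y μ)
    (hymean : ∀ i, ∫ ω, y i ω ∂μ = g (xs i))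
    (hybd : ∀ i, ∀ᵐ ω ∂μ, |y i ω - g (xs i)| ≤ 2 * M)
    (δ : ℝ) (hδ : δ ∈ Set.Ioo (0 : ℝ) 1) :
    ENNReal.ofReal (1 - δ) ≤
      μ {ω | |(1 / (n : ℝ)) * ∑ i, w i * y i ω - (1 / (n' : ℝ)) * ∑ j, g (xt j)| ≤
        (M / 2) * (2 * H.sup' hne fun h =>
          |(1 / (n : ℝ)) * ∑ i, w i * h (xs i) - (1 / (n' : ℝ)) * ∑ j, h (xt j)|) +
        2 * M * Real.sqrt (2 * (∑ i, (w i / n) ^ 2) * Real.log (2 / δ))} :=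
  stmt_6_general μ n n' hn xs xt w hw1 H hne M hM g hg y hymeas hyindep hymean hybd δ hδ
end

section
/- For any u in the unit simplex Δ ⊂ ℝⁿ, ‖u‖₂² − 1/n ≤ KL(u, e/n), where e/n is the uniform distribution and KL(u, v) = ∑_i u_i ln(u_i / v_i); in particular ‖u‖₂² ≤ 1/n + KL(u, e/n). -/
/-!
Pinsker's argument. Let `S` be the set of coordinates where `u i ≥ v i`, `P = ∑_{i ∈ S} u i` and
`Q = ∑_{i ∈ S} v i`. The log-sum inequality on `S` and on its complement bounds `KL(u, v)` below by
the divergence of `(P, 1 - P)` from `(Q, 1 - Q)`, which is at least `2 (P - Q)²` by a one-variable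
monotonicity argument. Since `u - v` sums to zero, its positive and negative parts both have
`ℓ¹` norm `P - Q`, so `‖u - v‖₂² ≤ 2 (P - Q)²`. For `v = e/n` one has `‖u - e/n‖₂² = ‖u‖₂² - 1/n`.
-/

open Real Finset

lemma sum_mul_log_div_sum_le_sum_mul_log_div {ι : Type*} (s : Finset ι) {u v : ι → ℝ}
    (hu : ∀ i ∈ s, 0 ≤ u i) (hv : ∀ i ∈ s, 0 < v i) :
    (∑ i ∈ s, u i) * log ((∑ i ∈ s, u i) / ∑ i ∈ s, v i) ≤ ∑ i ∈ s, u i * log (u i / v i) := by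
  rcases s.eq_empty_or_nonempty with rfl | hs
  · simp
  set U := ∑ i ∈ s, u i
  set V := ∑ i ∈ s, v i
  have hV : 0 < V := sum_pos hv hs
  have hjensen := convexOn_mul_log.map_sum_le (t := s) (w := fun i => v i / V)
    (p := fun i => u i / v i) (fun i hi => (div_pos (hv i hi) hV).le)
    (by rw [← sum_div, div_self hV.ne'])
    (fun i hi => Set.mem_Ici.2 (div_nonneg (hu i hi) (hv i hi).le))
  have hmean : ∑ i ∈ s, (v i / V) • (u i / v i) = U / V := by
    rw [sum_div]
    exact sum_congr rfl fun i hi => by rw [smul_eq_mul]; field_simp [(hv i hi).ne']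
  have hrhs : ∑ i ∈ s, (v i / V) • (u i / v i * log (u i / v i)) =
      (∑ i ∈ s, u i * log (u i / v i)) / V := by
    rw [sum_div]
    exact sum_congr rfl fun i hi => by rw [smul_eq_mul]; field_simp [(hv i hi).ne']
  rw [hmean, hrhs, le_div_iff₀ hV] at hjensen
  calc U * log (U / V) = U / V * log (U / V) * V := by field_simp
    _ ≤ _ := hjensen

lemma mul_log_div_eq {x y : ℝ} (hy : y ≠ 0) : x * log (x / y) = x * log x - x * log y := by
  rcases eq_or_ne x 0 with rfl | hx
  · simp
  · rw [log_div hx hy, mul_sub]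

/-- Writing `g` for this function, `g q - g p` is the binary divergence of `(p, 1 - p)` from
`(q, 1 - q)` minus `2 (p - q)²`. -/
lemma antitoneOn_cross_entropy_sub_two_mul_sq {p q : ℝ} (hq : 0 < q) (hp : p ≤ 1) :
    AntitoneOn (fun x => -(p * log x) - (1 - p) * log (1 - x) - 2 * (p - x) ^ 2)
      (Set.Icc q p) := by
  refine antitoneOn_of_hasDerivWithinAt_nonpos (convex_Icc q p) ?_ (f' := fun x =>
    -(p * x⁻¹) - (1 - p) * (-1 / (1 - x)) + 4 * (p - x)) ?_ ?_
  · have hlog : ContinuousOn (fun x => log x) (Set.Icc q p) :=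
      continuousOn_log.mono fun x hx => (hq.trans_le hx.1).ne'
    have hlog1 : ContinuousOn (fun x => (1 - p) * log (1 - x)) (Set.Icc q p) := by
      rcases hp.eq_or_lt with rfl | hp
      · simpa using continuousOn_const
      · exact continuousOn_const.mul (continuousOn_log.comp (by fun_prop)
          fun x hx => sub_ne_zero.2 (hx.2.trans_lt hp).ne')
    exact ((continuousOn_const.mul hlog).neg.sub hlog1).sub (by fun_prop)
  · intro x hx
    rw [interior_Icc] at hx
    have hx0 : x ≠ 0 := (hq.trans hx.1).ne'
    have hx1 : 1 - x ≠ 0 := sub_ne_zero.2 (hx.2.trans_le hp).ne'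
    have h1 := ((hasDerivAt_log hx0).const_mul p).neg
    have h2 := (((hasDerivAt_id x).const_sub 1).log hx1).const_mul (1 - p)
    exact (((h1.sub h2).sub ((((hasDerivAt_id x).const_sub p).pow 2).const_mul 2)).congr_deriv
      (by simp; ring)).hasDerivWithinAt
  · intro x hx
    rw [interior_Icc] at hx
    have hx0 : 0 < x := hq.trans hx.1
    have hx1 : 0 < 1 - x := sub_pos.2 (hx.2.trans_le hp)
    have hfactor : -(p * x⁻¹) - (1 - p) * (-1 / (1 - x)) + 4 * (p - x) =
        -((p - x) * (1 - 2 * x) ^ 2 / (x * (1 - x))) := by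
      field_simp; ring
    rw [hfactor, neg_nonpos]
    exact div_nonneg (mul_nonneg (sub_nonneg.2 hx.2.le) (sq_nonneg _)) (by positivity)

lemma two_mul_sq_sub_le_binary_kl {p q : ℝ} (hq : 0 < q) (hqp : q ≤ p) (hp : p ≤ 1) :
    2 * (p - q) ^ 2 ≤ p * log (p / q) + (1 - p) * log ((1 - p) / (1 - q)) := by
  rcases hqp.eq_or_lt with rfl | hqp
  · simp
  have hqp' := antitoneOn_cross_entropy_sub_two_mul_sq hq hp ⟨le_rfl, hqp.le⟩ ⟨hqp.le, le_rfl⟩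
    hqp.le
  rw [mul_log_div_eq hq.ne', mul_log_div_eq (sub_ne_zero.2 (hqp.trans_le hp).ne')]
  simp only [sub_self] at hqp'
  linarith

lemma sum_sq_le_two_mul_sq_sum_filter_nonneg {ι : Type*} [Fintype ι] (d : ι → ℝ)
    (hd : ∑ i, d i = 0) : ∑ i, d i ^ 2 ≤ 2 * (∑ i with 0 ≤ d i, d i) ^ 2 := by
  have hsplit := sum_filter_add_sum_filter_not univ (fun i => 0 ≤ d i) d
  have hsplit_sq := sum_filter_add_sum_filter_not univ (fun i => 0 ≤ d i) (fun i => d i ^ 2)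
  have hpos : ∑ i with 0 ≤ d i, d i ^ 2 ≤ (∑ i with 0 ≤ d i, d i) ^ 2 :=
    sum_sq_le_sq_sum_of_nonneg fun i hi => (mem_filter.1 hi).2
  have hneg : ∑ i with ¬0 ≤ d i, d i ^ 2 ≤ (∑ i with ¬0 ≤ d i, -d i) ^ 2 := by
    simpa only [neg_sq] using sum_sq_le_sq_sum_of_nonneg (f := fun i => -d i)
      fun i hi => neg_nonneg.2 (not_le.1 (mem_filter.1 hi).2).le
  have hbalance : ∑ i with ¬0 ≤ d i, -d i = ∑ i with 0 ≤ d i, d i := by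
    rw [sum_neg_distrib]; linarith
  rw [hbalance] at hneg
  linarith

theorem sum_sub_sq_le_sum_mul_log_div {ι : Type*} [Fintype ι] {u v : ι → ℝ}
    (hu : ∀ i, 0 ≤ u i) (hv : ∀ i, 0 < v i) (hu1 : ∑ i, u i = 1) (hv1 : ∑ i, v i = 1) :
    ∑ i, (u i - v i) ^ 2 ≤ ∑ i, u i * log (u i / v i) := by
  set S := ({i | 0 ≤ u i - v i} : Finset ι)
  have hl2 : ∑ i, (u i - v i) ^ 2 ≤ 2 * (∑ i ∈ S, u i - ∑ i ∈ S, v i) ^ 2 := by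
    rw [← sum_sub_distrib]
    exact sum_sq_le_two_mul_sq_sum_filter_nonneg _ (by rw [sum_sub_distrib, hu1, hv1, sub_self])
  have hS : S.Nonempty := by
    obtain ⟨i, -, hi⟩ := exists_le_of_sum_le (nonempty_of_sum_ne_zero (hv1 ▸ one_ne_zero))
      (hv1.trans hu1.symm).le
    exact ⟨i, mem_filter.2 ⟨mem_univ i, sub_nonneg.2 hi⟩⟩
  have hQ : 0 < ∑ i ∈ S, v i := sum_pos (fun i _ => hv i) hS
  have hQP : ∑ i ∈ S, v i ≤ ∑ i ∈ S, u i :=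
    sum_le_sum fun i hi => sub_nonneg.1 (mem_filter.1 hi).2
  have hP1 : ∑ i ∈ S, u i ≤ 1 :=
    hu1 ▸ sum_le_sum_of_subset_of_nonneg (subset_univ S) fun i _ _ => hu i
  have hlogsum : (∑ i ∈ S, u i) * log ((∑ i ∈ S, u i) / ∑ i ∈ S, v i) +
      (1 - ∑ i ∈ S, u i) * log ((1 - ∑ i ∈ S, u i) / (1 - ∑ i ∈ S, v i)) ≤
      ∑ i, u i * log (u i / v i) := by
    have hin := sum_mul_log_div_sum_le_sum_mul_log_div S (fun i _ => hu i) (fun i _ => hv i)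
    have hout := sum_mul_log_div_sum_le_sum_mul_log_div ({i | ¬0 ≤ u i - v i} : Finset ι)
      (fun i _ => hu i) (fun i _ => hv i)
    have hu_out : ∑ i with ¬0 ≤ u i - v i, u i = 1 - ∑ i ∈ S, u i := by
      linarith [sum_filter_add_sum_filter_not univ (fun i => 0 ≤ u i - v i) u]
    have hv_out : ∑ i with ¬0 ≤ u i - v i, v i = 1 - ∑ i ∈ S, v i := by
      linarith [sum_filter_add_sum_filter_not univ (fun i => 0 ≤ u i - v i) v]
    rw [← hu_out, ← hv_out, ← sum_filter_add_sum_filter_not univ (fun i => 0 ≤ u i - v i)]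
    exact add_le_add hin hout
  linarith [two_mul_sq_sub_le_binary_kl hQ hQP hP1]

/-- for `u` in the unit simplex, `‖u‖₂² − 1/n ≤ KL(u, uniform)`, where
`KL(u, e/n) = ∑ i, u i * log (u i / (1/n))` (with the convention `0 * log 0 = 0`, which holds
automatically since `Real.log 0 = 0`); in particular `‖u‖₂² ≤ 1/n + KL(u, e/n)`. -/
theorem stmt_8 (n : ℕ) (hn : 0 < n) (u : Fin n → ℝ)
    (hu0 : ∀ i, 0 ≤ u i) (hu1 : ∑ i, u i = 1) :
    (∑ i, (u i) ^ 2) - 1 / n ≤ ∑ i, u i * Real.log (u i / (1 / n)) ∧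
    (∑ i, (u i) ^ 2) ≤ 1 / n + ∑ i, u i * Real.log (u i / (1 / n)) := by
  have hn' : (0 : ℝ) < n := Nat.cast_pos.2 hn
  have hdist : ∑ i, (u i - 1 / n) ^ 2 = (∑ i, u i ^ 2) - 1 / n := by
    simp only [sub_sq, sum_add_distrib, sum_sub_distrib, ← sum_mul, ← mul_sum, hu1, sum_const,
      card_univ, Fintype.card_fin, nsmul_eq_mul]
    field_simp
    ring
  have hkl := sum_sub_sq_le_sum_mul_log_div hu0 (fun _ => one_div_pos.2 hn') hu1
    (by simp [hn'.ne'])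
  rw [hdist] at hkl
  exact ⟨hkl, by linarith⟩
end

section
/- The exponentiated gradient step solves a proximal problem: for w in the interior of the simplex, step size α > 0, and gradient g, the vector w' with w'_i ∝ w_i·exp(α g_i) is the unique maximizer over the simplex Δ of the objective α·⟨u, g⟩ − KL(u, w). -/
open Real Finset

/-- Per-term Gibbs bound: `u - v ≤ u * log (u/v)`. -/
private lemma term_ge (u v : ℝ) (hu : 0 ≤ u) (hv : 0 < v) :
    u - v ≤ u * Real.log (u / v) := by
  rcases eq_or_lt_of_le hu with h | h
  · simp [← h]; linarith
  · have hx : 0 < v / u := div_pos hv h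
    have := Real.log_le_sub_one_of_pos hx
    have hlog : Real.log (v / u) = - Real.log (u / v) := by
      rw [← Real.log_inv]; congr 1; field_simp
    rw [hlog] at this
    have h2 := mul_le_mul_of_nonneg_left this h.le
    rw [mul_neg] at h2
    have h3 : u * (v / u - 1) = v - u := by field_simp
    linarith

private lemma term_eq (u v : ℝ) (hu : 0 ≤ u) (hv : 0 < v)
    (h : u * Real.log (u / v) = u - v) : u = v := by
  rcases eq_or_lt_of_le hu with h0 | h0
  · exfalso; rw [← h0] at h; simp at h; linarith
  · by_contra hne
    have hx : 0 < v / u := div_pos hv h0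
    have hx1 : v / u ≠ 1 := by
      intro h1; apply hne; field_simp at h1; linarith
    have := Real.log_lt_sub_one_of_pos hx hx1
    have hlog : Real.log (v / u) = - Real.log (u / v) := by
      rw [← Real.log_inv]; congr 1; field_simp
    rw [hlog] at this
    have : u * (- Real.log (u / v)) < u * (v / u - 1) := by
      exact mul_lt_mul_of_pos_left this h0
    rw [mul_neg] at this
    have h3 : u * (v / u - 1) = v - u := by field_simp
    linarith

/-- Gibbs inequality on the simplex. -/
private lemma gibbs (n : ℕ) (u v : Fin n → ℝ) (hu : ∀ i, 0 ≤ u i) (hv : ∀ i, 0 < v i)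
    (hu1 : ∑ i, u i = 1) (hv1 : ∑ i, v i = 1) :
    0 ≤ ∑ i, u i * Real.log (u i / v i) ∧
      ((∑ i, u i * Real.log (u i / v i)) = 0 → u = v) := by
  have key : ∀ i : Fin n, u i - v i ≤ u i * Real.log (u i / v i) :=
    fun i => term_ge _ _ (hu i) (hv i)
  have hsum : ∑ i, (u i - v i) ≤ ∑ i, u i * Real.log (u i / v i) :=
    Finset.sum_le_sum (fun i _ => key i)
  have hz : ∑ i, (u i - v i) = 0 := by rw [Finset.sum_sub_distrib, hu1, hv1]; ring
  constructor
  · linarith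
  · intro h0
    have heach : ∀ i ∈ Finset.univ, u i * Real.log (u i / v i) - (u i - v i) = 0 := by
      apply (Finset.sum_eq_zero_iff_of_nonneg (fun i _ => by linarith [key i])).mp
      rw [Finset.sum_sub_distrib, h0, hz]; ring
    funext i
    exact term_eq _ _ (hu i) (hv i) (by linarith [heach i (Finset.mem_univ i)])

/-- the exponentiated gradient step `w'_i ∝ w_i exp(α g_i)` is the unique maximizer
over the unit simplex of `u ↦ α⟨u, g⟩ − KL(u, w)`. -/
theorem stmt_10 (n : ℕ) (w g : Fin n → ℝ) (α : ℝ) (hα : 0 < α)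
    (hw0 : ∀ i, 0 < w i) (hw1 : ∑ i, w i = 1)
    (w' : Fin n → ℝ)
    (hw' : ∀ i, w' i = w i * Real.exp (α * g i) / ∑ j, w j * Real.exp (α * g j)) :
    (∀ u : Fin n → ℝ, (∀ i, 0 ≤ u i) → (∑ i, u i = 1) →
      α * (∑ i, u i * g i) - (∑ i, u i * Real.log (u i / w i)) ≤
        α * (∑ i, w' i * g i) - (∑ i, w' i * Real.log (w' i / w i))) ∧
    (∀ u : Fin n → ℝ, (∀ i, 0 ≤ u i) → (∑ i, u i = 1) →
      α * (∑ i, u i * g i) - (∑ i, u i * Real.log (u i / w i)) =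
        α * (∑ i, w' i * g i) - (∑ i, w' i * Real.log (w' i / w i)) → u = w') := by
  set Z : ℝ := ∑ j, w j * Real.exp (α * g j) with hZdef
  have hne : (Finset.univ : Finset (Fin n)).Nonempty := by
    by_contra h
    rw [Finset.not_nonempty_iff_eq_empty] at h
    rw [h, Finset.sum_empty] at hw1
    norm_num at hw1
  have hZ : 0 < Z :=
    Finset.sum_pos (fun i _ => mul_pos (hw0 i) (Real.exp_pos _)) hne
  have hw'0 : ∀ i, 0 < w' i := fun i => by
    rw [hw' i]; exact div_pos (mul_pos (hw0 i) (Real.exp_pos _)) hZ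
  have hw'1 : ∑ i, w' i = 1 := by
    have h1 : ∑ i, w' i = ∑ i, w i * Real.exp (α * g i) / Z :=
      Finset.sum_congr rfl (fun i _ => hw' i)
    rw [h1, ← Finset.sum_div, ← hZdef, div_self hZ.ne']
  -- key rewrite: objective = log Z − KL(u, w')
  have key : ∀ u : Fin n → ℝ, (∀ i, 0 ≤ u i) → (∑ i, u i = 1) →
      α * (∑ i, u i * g i) - (∑ i, u i * Real.log (u i / w i)) =
        Real.log Z - ∑ i, u i * Real.log (u i / w' i) := by
    intro u hu hu1
    have : ∀ i : Fin n, α * (u i * g i) - u i * Real.log (u i / w i) =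
        u i * Real.log Z - u i * Real.log (u i / w' i) := by
      intro i
      rcases eq_or_lt_of_le (hu i) with h0 | h0
      · simp [← h0]
      · have hlogw' : Real.log (w' i) = Real.log (w i) + α * g i - Real.log Z := by
          rw [hw' i, Real.log_div (mul_pos (hw0 i) (Real.exp_pos _)).ne' hZ.ne',
            Real.log_mul (hw0 i).ne' (Real.exp_pos _).ne', Real.log_exp]
        rw [Real.log_div h0.ne' (hw'0 i).ne', Real.log_div h0.ne' (hw0 i).ne', hlogw']
        ring
    calc α * (∑ i, u i * g i) - (∑ i, u i * Real.log (u i / w i))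
        = ∑ i, (α * (u i * g i) - u i * Real.log (u i / w i)) := by
          rw [Finset.sum_sub_distrib, Finset.mul_sum]
      _ = ∑ i, (u i * Real.log Z - u i * Real.log (u i / w' i)) :=
          Finset.sum_congr rfl (fun i _ => this i)
      _ = Real.log Z - ∑ i, u i * Real.log (u i / w' i) := by
          rw [Finset.sum_sub_distrib, ← Finset.sum_mul, hu1, one_mul]
  have hD0 : ∑ i, w' i * Real.log (w' i / w' i) = 0 := by
    apply Finset.sum_eq_zero
    intro i _
    rw [div_self (hw'0 i).ne']
    simp
  have keyw' : α * (∑ i, w' i * g i) - (∑ i, w' i * Real.log (w' i / w i)) = Real.log Z := by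
    rw [key w' (fun i => (hw'0 i).le) hw'1, hD0, sub_zero]
  constructor
  · intro u hu hu1
    rw [key u hu hu1, keyw']
    have := (gibbs n u w' hu hw'0 hu1 hw'1).1
    linarith
  · intro u hu hu1 heq
    rw [key u hu hu1, keyw'] at heq
    exact (gibbs n u w' hu hw'0 hu1 hw'1).2 (by linarith)
end

section
/- If g is not necessarily in Comb(H), then for any f ∈ Comb(H) (with coefficient bound M), | (1/n)∑_{i=1}^n w_i g(x_i) − (1/n')∑_{i=n+1}^{n+n'} g(x_i) | ≤ (M/2)·d_H(w) + (1/n)∑_{i=1}^n w_i |g(x_i) − f(x_i)| + (1/n')∑_{i=n+1}^{n+n'} |g(x_i) − f(x_i)|; in particular the bound holds with the infimum over f ∈ Comb(H) of the approximation terms. -/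
set_option maxHeartbeats 1000000


/-- misspecified version of Lemma 2: if `g` is not necessarily in `Comb(H)`, then
for any `f ∈ Comb(H)` the weighted-vs-unweighted mean difference of `g` is bounded by
`(M/2)·d_H(w)` plus the (weighted and unweighted) approximation errors of `g` by `f`. -/
theorem stmt_17 {𝒳 : Type*} (n n' : ℕ) (hn : 0 < n) (hn' : 0 < n')
    (xs : Fin n → 𝒳) (xt : Fin n' → 𝒳) (w : Fin n → ℝ)
    (hw0 : ∀ i, 0 ≤ w i) (hw1 : (1 / (n : ℝ)) * ∑ i, w i = 1)
    (H : Finset (𝒳 → ℝ)) (hne : H.Nonempty)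
    (h01 : ∀ h ∈ H, ∀ x, h x = 0 ∨ h x = 1)
    (M : ℝ) (hM : 0 < M) (g f : 𝒳 → ℝ)
    (hf : ∃ (k : ℕ) (α : Fin k → ℝ) (hs : Fin k → 𝒳 → ℝ),
      (∀ j, hs j ∈ H) ∧ (∀ x, f x = ∑ j, α j * hs j x) ∧ (∑ j, |α j|) ≤ M) :
    |(1 / (n : ℝ)) * ∑ i, w i * g (xs i) - (1 / (n' : ℝ)) * ∑ j, g (xt j)| ≤
      (M / 2) * (2 * H.sup' hne fun h =>
        |(1 / (n : ℝ)) * ∑ i, w i * h (xs i) - (1 / (n' : ℝ)) * ∑ j, h (xt j)|) +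
      (1 / (n : ℝ)) * ∑ i, w i * |g (xs i) - f (xs i)| +
      (1 / (n' : ℝ)) * ∑ j, |g (xt j) - f (xt j)| := by
  obtain ⟨k, α, hs, hmem, hfx, hαM⟩ := hf
  set S : ℝ := H.sup' hne fun h =>
      |(1 / (n : ℝ)) * ∑ i, w i * h (xs i) - (1 / (n' : ℝ)) * ∑ j, h (xt j)| with hSdef
  have hS0 : 0 ≤ S := by
    rw [hSdef]
    have h2 := Finset.le_sup' (s := H)
      (f := fun h => |(1 / (n : ℝ)) * ∑ i, w i * h (xs i)
        - (1 / (n' : ℝ)) * ∑ j, h (xt j)|) hne.choose_spec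
    exact le_trans (abs_nonneg _) h2
  -- linearity of the difference functional on f
  have key : ∀ (m : ℕ) (ys : Fin m → 𝒳) (v : Fin m → ℝ) (c : ℝ),
      c * ∑ i, v i * f (ys i) = ∑ t, α t * (c * ∑ i, v i * hs t (ys i)) := by
    intro m ys v c
    calc c * ∑ i, v i * f (ys i)
        = ∑ i, ∑ t, c * (v i * (α t * hs t (ys i))) := by
          simp [hfx, Finset.mul_sum]
      _ = ∑ t, ∑ i, c * (v i * (α t * hs t (ys i))) := Finset.sum_comm
      _ = ∑ t, α t * (c * ∑ i, v i * hs t (ys i)) := by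
          refine Finset.sum_congr rfl fun t _ => ?_
          rw [Finset.mul_sum, Finset.mul_sum]
          exact Finset.sum_congr rfl fun i _ => by ring
  have hDf : (1 / (n : ℝ)) * ∑ i, w i * f (xs i) - (1 / (n' : ℝ)) * ∑ j, f (xt j)
      = ∑ t, α t * ((1 / (n : ℝ)) * ∑ i, w i * hs t (xs i)
          - (1 / (n' : ℝ)) * ∑ j, hs t (xt j)) := by
    have h1 := key n xs w (1 / (n : ℝ))
    have h2 := key n' xt (fun _ => 1) (1 / (n' : ℝ))
    simp only [one_mul] at h2
    rw [h1, h2, ← Finset.sum_sub_distrib]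
    exact Finset.sum_congr rfl fun t _ => by ring
  have hDfle : |(1 / (n : ℝ)) * ∑ i, w i * f (xs i) - (1 / (n' : ℝ)) * ∑ j, f (xt j)|
      ≤ M * S := by
    rw [hDf]
    calc |∑ t, α t * ((1 / (n : ℝ)) * ∑ i, w i * hs t (xs i)
            - (1 / (n' : ℝ)) * ∑ j, hs t (xt j))|
        ≤ ∑ t, |α t * ((1 / (n : ℝ)) * ∑ i, w i * hs t (xs i)
            - (1 / (n' : ℝ)) * ∑ j, hs t (xt j))| := Finset.abs_sum_le_sum_abs _ _
      _ ≤ ∑ t, |α t| * S := by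
          refine Finset.sum_le_sum fun t _ => ?_
          rw [abs_mul, hSdef]
          exact mul_le_mul_of_nonneg_left
            (Finset.le_sup' (fun h => |(1 / (n : ℝ)) * ∑ i, w i * h (xs i)
              - (1 / (n' : ℝ)) * ∑ j, h (xt j)|) (hmem t)) (abs_nonneg _)
      _ = (∑ t, |α t|) * S := (Finset.sum_mul ..).symm
      _ ≤ M * S := mul_le_mul_of_nonneg_right hαM hS0
  have hA : |(1 / (n : ℝ)) * ∑ i, w i * g (xs i) - (1 / (n : ℝ)) * ∑ i, w i * f (xs i)|
      ≤ (1 / (n : ℝ)) * ∑ i, w i * |g (xs i) - f (xs i)| := by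
    rw [← mul_sub, ← Finset.sum_sub_distrib]
    rw [abs_mul]
    have : |(1 : ℝ) / n| = 1 / n := abs_of_nonneg (by positivity)
    rw [this]
    refine mul_le_mul_of_nonneg_left ?_ (by positivity)
    refine le_trans (Finset.abs_sum_le_sum_abs _ _) (Finset.sum_le_sum fun i _ => ?_)
    rw [← mul_sub, abs_mul, abs_of_nonneg (hw0 i)]
  have hB : |(1 / (n' : ℝ)) * ∑ j, g (xt j) - (1 / (n' : ℝ)) * ∑ j, f (xt j)|
      ≤ (1 / (n' : ℝ)) * ∑ j, |g (xt j) - f (xt j)| := by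
    rw [← mul_sub, ← Finset.sum_sub_distrib, abs_mul]
    have : |(1 : ℝ) / n'| = 1 / n' := abs_of_nonneg (by positivity)
    rw [this]
    exact mul_le_mul_of_nonneg_left (Finset.abs_sum_le_sum_abs _ _) (by positivity)
  have tri : |(1 / (n : ℝ)) * ∑ i, w i * g (xs i) - (1 / (n' : ℝ)) * ∑ j, g (xt j)|
      ≤ |(1 / (n : ℝ)) * ∑ i, w i * f (xs i) - (1 / (n' : ℝ)) * ∑ j, f (xt j)|
        + |(1 / (n : ℝ)) * ∑ i, w i * g (xs i) - (1 / (n : ℝ)) * ∑ i, w i * f (xs i)|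
        + |(1 / (n' : ℝ)) * ∑ j, g (xt j) - (1 / (n' : ℝ)) * ∑ j, f (xt j)| := by
    set Ag := (1 / (n : ℝ)) * ∑ i, w i * g (xs i)
    set Af := (1 / (n : ℝ)) * ∑ i, w i * f (xs i)
    set Bg := (1 / (n' : ℝ)) * ∑ j, g (xt j)
    set Bf := (1 / (n' : ℝ)) * ∑ j, f (xt j)
    calc |Ag - Bg| = |(Af - Bf) + (Ag - Af) - (Bg - Bf)| := by ring_nf
      _ ≤ |(Af - Bf) + (Ag - Af)| + |Bg - Bf| := abs_sub _ _
      _ ≤ |Af - Bf| + |Ag - Af| + |Bg - Bf| := by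
          gcongr; exact abs_add_le _ _
  have : (M / 2) * (2 * S) = M * S := by ring
  rw [this]
  calc |(1 / (n : ℝ)) * ∑ i, w i * g (xs i) - (1 / (n' : ℝ)) * ∑ j, g (xt j)|
      ≤ _ + _ + _ := tri
    _ ≤ M * S + (1 / (n : ℝ)) * ∑ i, w i * |g (xs i) - f (xs i)|
        + (1 / (n' : ℝ)) * ∑ j, |g (xt j) - f (xt j)| := by
        gcongr
end
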